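/- Let n ≥ 1, k ≥ 1, and let f : {0,1}^n → {0,1} be a total Boolean function that depends on all n variables (i.e., for every index j ∈ [n] there exists x ∈ {0,1}^n with f(x) ≠ f(x ⊕ e^j)). Suppose there exist a unit vector ψ ∈ ℂ^{(n+1)^k} and a positive semidefinite matrix M on ℂ^{(n+1)^k} with M ≤ I such that ⟨ψ| O_x^{⊗k} M O_x^{⊗k} |ψ⟩ = 1 for every x with f(x)=0 and ⟨ψ| O_x^{⊗k} M O_x^{⊗k} |ψ⟩ = 0 for every x with f(x)=1 (i.e., the algorithm is exact). Then k ≥ n/2. -/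

import Mathlib

open Matrix
open scoped ComplexOrder

/-- Extend an `n`-bit string `x` to indices `0,…,n` with `x₀ := 0` (false). -/
noncomputable def extendBit {n : ℕ} (x : Fin n → Bool) : Fin (n + 1) → Bool :=
  Fin.cases false x

/-- The `k`-fold tensor power `O_x^{⊗k}` of the phase oracle of `x`:
the diagonal matrix on `ℂ^{(n+1)^k}` acting as
`O_x^{⊗k}|i₁,…,i_k⟩ = (−1)^{x_{i₁}+⋯+x_{i_k}}|i₁,…,i_k⟩`. -/
noncomputable def oracleK (n k : ℕ) (x : Fin n → Bool) :
    Matrix (Fin k → Fin (n + 1)) (Fin k → Fin (n + 1)) ℂ :=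
  Matrix.diagonal fun i => ∏ m, if extendBit x (i m) then (-1 : ℂ) else 1

/-!
Write `φ x = O_x^{⊗k} ψ`. Since `0 ≤ M ≤ 1`, exactness forces `M φ x = φ x` when `f x = 0`
and `M φ x = 0` when `f x = 1`, so `φ x ⊥ φ y` whenever `f x ≠ f y`. The oracles of `x` and
`x ⊕ e^j` differ on `|i⟩` by the sign `(-1)^{#{m | i_m = j}}`, hence sensitivity of `f` to `j`
gives `∑ᵢ (1 - (-1)^{#{m | i_m = j}}) |ψᵢ|² = 1`. Summing over `j` yields `n`, while for a fixed
tuple `i` at most `k` indices `j` occur in it, each contributing at most `2`; so `n ≤ 2k`.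
-/

open Finset

section Measurement

variable {𝕜 ι : Type*} [RCLike 𝕜] [Fintype ι] {M : Matrix ι ι 𝕜} {u v : ι → 𝕜}

theorem Matrix.mulVec_eq_self_of_posSemidef_one_sub [DecidableEq ι] (hMI : (1 - M).PosSemidef)
    (hu : star u ⬝ᵥ (M *ᵥ u) = star u ⬝ᵥ u) : M *ᵥ u = u := by
  have h : (1 - M) *ᵥ u = 0 := (hMI.dotProduct_mulVec_zero_iff u).1 <| by
    rw [sub_mulVec, one_mulVec, dotProduct_sub, hu, sub_self]
  rwa [sub_mulVec, one_mulVec, sub_eq_zero, eq_comm] at h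

theorem Matrix.IsHermitian.star_dotProduct_eq_zero (hM : M.IsHermitian) (hu : M *ᵥ u = u)
    (hv : M *ᵥ v = 0) : star u ⬝ᵥ v = 0 :=
  calc star u ⬝ᵥ v = star (M *ᵥ u) ⬝ᵥ v := by rw [hu]
    _ = star u ⬝ᵥ (M *ᵥ v) := by rw [star_mulVec, hM.eq, dotProduct_mulVec]
    _ = 0 := by rw [hv, dotProduct_zero]

end Measurement

theorem Matrix.star_dotProduct_conjTranspose_mul_mul_mulVec {R ι : Type*} [Semiring R]
    [StarRing R] [Fintype ι] (A M : Matrix ι ι R) (v : ι → R) :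
    star v ⬝ᵥ ((Aᴴ * M * A) *ᵥ v) = star (A *ᵥ v) ⬝ᵥ (M *ᵥ (A *ᵥ v)) := by
  rw [← mulVec_mulVec, ← mulVec_mulVec, dotProduct_mulVec, star_mulVec]

theorem Matrix.star_diagonal_ofReal_mulVec_dotProduct {ι : Type*} [Fintype ι] [DecidableEq ι]
    (r t : ι → ℝ) (ψ : ι → ℂ) :
    star (diagonal (fun i => (r i : ℂ)) *ᵥ ψ) ⬝ᵥ (diagonal (fun i => (t i : ℂ)) *ᵥ ψ) =
      ((∑ i, r i * t i * ‖ψ i‖ ^ 2 : ℝ) : ℂ) := by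
  simp only [dotProduct, mulVec_diagonal, Pi.star_apply, star_mul', Complex.star_def,
    Complex.conj_ofReal, Complex.ofReal_sum, Complex.ofReal_mul, Complex.ofReal_pow]
  refine sum_congr rfl fun i _ => ?_
  rw [← Complex.conj_mul']
  ring

section PhaseSign

variable {ι α : Type*} [Fintype ι]

def phaseSign (b : α → Bool) (i : ι → α) : ℝ :=
  ∏ m, if b (i m) then -1 else 1

theorem phaseSign_mul_phaseSign (b c : α → Bool) (i : ι → α) :
    phaseSign b i * phaseSign c i = (-1) ^ #{m | b (i m) ≠ c (i m)} := by
  rw [phaseSign, phaseSign, ← prod_mul_distrib, ← prod_const, prod_filter]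
  refine prod_congr rfl fun m _ => ?_
  cases b (i m) <;> cases c (i m) <;> norm_num

theorem phaseSign_mul_self (b : α → Bool) (i : ι → α) : phaseSign b i * phaseSign b i = 1 := by
  simp [phaseSign_mul_phaseSign]

theorem phaseSign_mul_phaseSign_flip [DecidableEq α] (b : α → Bool) (a : α) (i : ι → α) :
    phaseSign b i * phaseSign (Function.update b a (!b a)) i = (-1) ^ #{m | i m = a} := by
  rw [phaseSign_mul_phaseSign]
  congr 3
  ext m
  by_cases h : i m = a <;> simp [h]

end PhaseSign

section SignCount

variable {ι α : Type*} [Fintype ι] [Fintype α] [DecidableEq α]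

theorem one_sub_neg_one_pow_le (c : ℕ) : 1 - (-1 : ℝ) ^ c ≤ 2 * c := by
  rcases c with _ | c
  · simp
  · rcases neg_one_pow_eq_or ℝ (c + 1) with h | h <;> rw [h] <;> push_cast <;> linarith

theorem sum_one_sub_neg_one_pow_card_fiber_le (g : ι → α) (s : Finset α) :
    ∑ a ∈ s, (1 - (-1 : ℝ) ^ #{m | g m = a}) ≤ 2 * Fintype.card ι :=
  calc ∑ a ∈ s, (1 - (-1 : ℝ) ^ #{m | g m = a})
      ≤ ∑ a ∈ s, 2 * (#{m | g m = a} : ℝ) := sum_le_sum fun a _ => one_sub_neg_one_pow_le _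
    _ ≤ ∑ a, 2 * (#{m | g m = a} : ℝ) := sum_le_univ_sum_of_nonneg fun a => by positivity
    _ = 2 * Fintype.card ι := by
      rw [← mul_sum, ← Nat.cast_sum, ← card_eq_sum_card_fiberwise (fun m _ => mem_univ (g m)),
        card_univ]

theorem card_le_two_mul_card_of_sum_neg_one_pow_mul_eq_zero [DecidableEq ι] (w : (ι → α) → ℝ)
    (hw₀ : ∀ i, 0 ≤ w i) (hw : ∑ i, w i = 1) (s : Finset α)
    (hs : ∀ a ∈ s, ∑ i, (-1 : ℝ) ^ #{m | i m = a} * w i = 0) :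
    (#s : ℝ) ≤ 2 * Fintype.card ι :=
  calc (#s : ℝ) = ∑ a ∈ s, ∑ i, (1 - (-1 : ℝ) ^ #{m | i m = a}) * w i := by
        rw [card_eq_sum_ones, Nat.cast_sum]
        refine sum_congr rfl fun a ha => ?_
        simp only [sub_mul, one_mul, sum_sub_distrib, Nat.cast_one]
        rw [hw, hs a ha, sub_zero]
    _ = ∑ i, (∑ a ∈ s, (1 - (-1 : ℝ) ^ #{m | i m = a})) * w i := by
        rw [sum_comm]
        simp only [sum_mul]
    _ ≤ ∑ i, 2 * Fintype.card ι * w i :=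
        sum_le_sum fun i _ =>
          mul_le_mul_of_nonneg_right (sum_one_sub_neg_one_pow_card_fiber_le i s) (hw₀ i)
    _ = 2 * Fintype.card ι := by rw [← mul_sum, hw, mul_one]

end SignCount

section Oracle

variable {n k : ℕ}

theorem extendBit_update (x : Fin n → Bool) (j : Fin n) (c : Bool) :
    extendBit (Function.update x j c) = Function.update (extendBit x) j.succ c :=
  Fin.cons_update _ _ _ _

theorem oracleK_eq_diagonal (x : Fin n → Bool) :
    oracleK n k x = diagonal fun i => (phaseSign (extendBit x) i : ℂ) := by
  simp only [oracleK, phaseSign, Complex.ofReal_prod, apply_ite Complex.ofReal, Complex.ofReal_neg,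
    Complex.ofReal_one]

theorem oracleK_conjTranspose (x : Fin n → Bool) : (oracleK n k x)ᴴ = oracleK n k x := by
  simp [oracleK_eq_diagonal, diagonal_conjTranspose]

theorem star_oracleK_mulVec_dotProduct_self (x : Fin n → Bool) (ψ : (Fin k → Fin (n + 1)) → ℂ) :
    star (oracleK n k x *ᵥ ψ) ⬝ᵥ (oracleK n k x *ᵥ ψ) = ((∑ i, ‖ψ i‖ ^ 2 : ℝ) : ℂ) := by
  simp only [oracleK_eq_diagonal, star_diagonal_ofReal_mulVec_dotProduct, phaseSign_mul_self,
    one_mul]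

theorem star_oracleK_mulVec_dotProduct_flip (x : Fin n → Bool) (j : Fin n)
    (ψ : (Fin k → Fin (n + 1)) → ℂ) :
    star (oracleK n k x *ᵥ ψ) ⬝ᵥ (oracleK n k (Function.update x j (!x j)) *ᵥ ψ) =
      ((∑ i, (-1 : ℝ) ^ #{m | i m = j.succ} * ‖ψ i‖ ^ 2 : ℝ) : ℂ) := by
  simp only [oracleK_eq_diagonal, star_diagonal_ofReal_mulVec_dotProduct, extendBit_update]
  congr 2 with i
  exact congrArg (· * _) (phaseSign_mul_phaseSign_flip (extendBit x) j.succ i)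

end Oracle

theorem exact_nonadaptive_quantum_computation_lower_bound_general
    (n k : ℕ)
    (f : (Fin n → Bool) → Bool)
    (hdep : ∀ j : Fin n, ∃ x : Fin n → Bool, f x ≠ f (Function.update x j (!x j)))
    (ψ : (Fin k → Fin (n + 1)) → ℂ) (hψ : ∑ i, ‖ψ i‖ ^ 2 = 1)
    (M : Matrix (Fin k → Fin (n + 1)) (Fin k → Fin (n + 1)) ℂ)
    (hM : M.PosSemidef) (hMI : (1 - M).PosSemidef)
    (h0 : ∀ x, f x = false →
      star ψ ⬝ᵥ ((oracleK n k x * M * oracleK n k x) *ᵥ ψ) = 1)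
    (h1 : ∀ x, f x = true →
      star ψ ⬝ᵥ ((oracleK n k x * M * oracleK n k x) *ᵥ ψ) = 0) :
    (n : ℝ) / 2 ≤ k := by
  set φ := fun x => oracleK n k x *ᵥ ψ
  have hquad (x) : star ψ ⬝ᵥ ((oracleK n k x * M * oracleK n k x) *ᵥ ψ) =
      star (φ x) ⬝ᵥ (M *ᵥ φ x) := by
    simpa only [oracleK_conjTranspose] using
      star_dotProduct_conjTranspose_mul_mul_mulVec (oracleK n k x) M ψ
  have hunit (x) : star (φ x) ⬝ᵥ φ x = 1 := by
    rw [star_oracleK_mulVec_dotProduct_self, hψ, Complex.ofReal_one]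
  have hsep (x y) (hx : f x = false) (hy : f y = true) : star (φ x) ⬝ᵥ φ y = 0 :=
    hM.isHermitian.star_dotProduct_eq_zero
      (mulVec_eq_self_of_posSemidef_one_sub hMI (by rw [← hquad, h0 x hx, hunit]))
      ((hM.dotProduct_mulVec_zero_iff _).1 (by rw [← hquad, h1 y hy]))
  have horth (x y) (hxy : f x ≠ f y) : star (φ x) ⬝ᵥ φ y = 0 := by
    cases hx : f x <;> cases hy : f y <;> simp only [hx, hy, ne_eq, not_true_eq_false] at hxy
    · exact hsep x y hx hy
    · rw [star_dotProduct, hsep y x hy hx, star_zero]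
  have hflip (j : Fin n) : ∑ i, (-1 : ℝ) ^ #{m | i m = j.succ} * ‖ψ i‖ ^ 2 = 0 := by
    obtain ⟨x, hx⟩ := hdep j
    rw [← Complex.ofReal_eq_zero, ← star_oracleK_mulVec_dotProduct_flip]
    exact horth _ _ hx
  have hbound := card_le_two_mul_card_of_sum_neg_one_pow_mul_eq_zero (fun i => ‖ψ i‖ ^ 2)
    (fun i => by positivity) hψ (univ.map (Fin.succEmb n)) fun a ha => by
      obtain ⟨j, -, rfl⟩ := mem_map.1 ha
      exact hflip j
  simp only [card_map, card_univ, Fintype.card_fin] at hbound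
  linarith

/-- Any *exact* nonadaptive quantum query algorithm `(ψ, M)` making `k`
queries that computes a total boolean function `f` depending on all `n` variables
satisfies `k ≥ n/2`. -/
theorem exact_nonadaptive_quantum_computation_lower_bound
    (n k : ℕ) (hn : 1 ≤ n) (hk : 1 ≤ k)
    (f : (Fin n → Bool) → Bool)
    (hdep : ∀ j : Fin n, ∃ x : Fin n → Bool, f x ≠ f (Function.update x j (!x j)))
    (ψ : (Fin k → Fin (n + 1)) → ℂ) (hψ : ∑ i, ‖ψ i‖ ^ 2 = 1)
    (M : Matrix (Fin k → Fin (n + 1)) (Fin k → Fin (n + 1)) ℂ)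
    (hM : M.PosSemidef) (hMI : (1 - M).PosSemidef)
    (h0 : ∀ x, f x = false →
      star ψ ⬝ᵥ ((oracleK n k x * M * oracleK n k x) *ᵥ ψ) = 1)
    (h1 : ∀ x, f x = true →
      star ψ ⬝ᵥ ((oracleK n k x * M * oracleK n k x) *ᵥ ψ) = 0) :
    (n : ℝ) / 2 ≤ k :=
  exact_nonadaptive_quantum_computation_lower_bound_general n k f hdep ψ hψ M hM hMI h0 h1
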